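/- arXiv:1806.06895 — 3 statements merged into one kernel-verified Lean document; each statement's English description precedes it below -/
import Mathlib

section
/- Every causal linear operator G : l_{2e} → l_{2e} is continuous when l_{2e} is endowed with the topology of pointwise (coordinatewise) convergence. -/
/-- Every causal linear operator `G : l_{2e} → l_{2e}` is continuous for
the topology of pointwise (coordinatewise) convergence (the product topology on `ℕ → ℝ`). -/
theorem stmt_10
    (P : ℕ → (ℕ → ℝ) → (ℕ → ℝ))
    (hP : ∀ t x τ, P t x τ = if τ ≤ t then x τ else 0)
    (G : (ℕ → ℝ) →ₗ[ℝ] (ℕ → ℝ))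
    (hcausal : ∀ t : ℕ, (P t) ∘ ⇑G ∘ (P t) = (P t) ∘ ⇑G) :
    Continuous ⇑G := by
  -- basis vectors
  set e : ℕ → ℕ → ℝ := fun i τ => if τ = i then 1 else 0 with he
  have hPdecomp : ∀ t x, P t x = ∑ i ∈ Finset.range (t + 1), x i • e i := by
    intro t x
    funext τ
    rw [hP]
    simp only [Finset.sum_apply, Pi.smul_apply, he, smul_eq_mul, mul_ite, mul_one, mul_zero]
    rw [Finset.sum_ite_eq (Finset.range (t + 1)) τ x]
    simp [Nat.lt_succ_iff]
  -- coordinate formula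
  have key : ∀ t x, G x t = ∑ i ∈ Finset.range (t + 1), x i * G (e i) t := by
    intro t x
    have h1 : P t (G (P t x)) = P t (G x) := congrFun (hcausal t) x
    have h2 : G x t = P t (G x) t := by rw [hP]; simp
    rw [h2, ← h1, hP]
    simp only [le_refl, if_true]
    rw [hPdecomp, map_sum]
    simp only [map_smul, Finset.sum_apply, Pi.smul_apply, smul_eq_mul]
  apply continuous_pi
  intro t
  have : (fun x : ℕ → ℝ => G x t) =
      fun x => ∑ i ∈ Finset.range (t + 1), x i * G (e i) t := by
    funext x; exact key t x
  rw [this]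
  exact continuous_finset_sum _ fun i _ => (continuous_apply i).mul continuous_const
end

section
/- Under the assumption ∂²φ/∂(qε)∂θ̂ = 0, the signal ε_E(t+1) := Q(q⁻¹, θ̂) ε(t+1) + (1 - Q(q⁻¹, θ̂)) e(t+1), where Q(q⁻¹, θ̂) = 1 + θ̂ᵀ ∂φ/∂(qε), has a gradient with respect to θ̂ given by ∂ε_E(t+1)/∂θ̂ = -φ(t) + (∂Q/∂θ̂)(ε(t+1) - e(t+1)) = -φ(t) + (∂φ/∂(qε))(ε(t+1) - e(t+1)), and consequently the 'equivalent regressor' φ_E(t) := -∂ε_E(t+1)/∂θ̂ satisfies ∂φ_E(t)/∂θ̂ = 0. -/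
/-!
Substituting the pseudo-linear relation `ε(t+1) = y(t+1) - θᵀ(ψ(t) + M(qε)(t))` into
`ε_E(t+1) = ε(t+1) + θᵀ M(q(ε - e))(t)`, the terms `θᵀ M(qε)(t)` cancel by linearity of `M`, so
`ε_E(t+1) = y(t+1) - θᵀ(ψ(t) + M(qe)(t))` is affine in `θ`. Its gradient is the constant
`-(ψ(t) + M(qe)(t)) = -φ(t) + M(q(ε - e))(t)`, and hence `φ_E(t)` does not depend on `θ`.
-/

theorem fderiv_const_sub_sum_mul_apply_single {𝕜 ι : Type*} [NontriviallyNormedField 𝕜]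
    [Fintype ι] [DecidableEq ι] (c : 𝕜) (a θ : ι → 𝕜) (i : ι) :
    fderiv 𝕜 (fun θ' : ι → 𝕜 => c - ∑ j, θ' j * a j) θ (Pi.single i 1) = -a i := by
  have h : HasFDerivAt (fun θ' : ι → 𝕜 => c - ∑ j, θ' j * a j)
      (-∑ j, a j • ContinuousLinearMap.proj (R := 𝕜) j) θ :=
    (HasFDerivAt.fun_sum fun j _ =>
      (hasFDerivAt_apply (𝕜 := 𝕜) j θ).mul_const (a j)).const_sub c
  rw [h.fderiv]
  simp [Pi.single_apply]

theorem equivalentError_eq_affine {R ι : Type*} [CommRing R] [Fintype ι]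
    (M : (ℕ → R) →ₗ[R] (ℕ → ι → R)) (y e ε εE : ℕ → R) (ψ φ : ℕ → ι → R) (θ : ι → R) (t : ℕ)
    (hφ : φ t = ψ t + M (fun s => ε (s + 1)) t)
    (hrel : ε (t + 1) = y (t + 1) - ∑ i, θ i * φ t i)
    (hεE : εE (t + 1) = ε (t + 1) + ∑ j, θ j * M (fun s => ε (s + 1) - e (s + 1)) t j) :
    εE (t + 1) = y (t + 1) - ∑ j, θ j * (ψ t j + M (fun s => e (s + 1)) t j) := by
  have hM : M (fun s => ε (s + 1) - e (s + 1))
      = M (fun s => ε (s + 1)) - M (fun s => e (s + 1)) := map_sub M _ _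
  simp only [hεE, hrel, hφ, hM, Pi.add_apply, Pi.sub_apply, mul_add, mul_sub,
    Finset.sum_add_distrib, Finset.sum_sub_distrib]
  ring

theorem stmt_16_general {n : ℕ}
    (y e : ℕ → ℝ) (ψ : ℕ → Fin n → ℝ)
    (M : (ℕ → ℝ) →ₗ[ℝ] (ℕ → Fin n → ℝ))
    (ε : (Fin n → ℝ) → ℕ → ℝ) (φ : (Fin n → ℝ) → ℕ → Fin n → ℝ)
    (hφ : ∀ θ t, φ θ t = ψ t + M (fun s => ε θ (s + 1)) t)
    (hrel : ∀ θ t, ε θ (t + 1) = y (t + 1) - ∑ i, θ i * φ θ t i)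
    (εE : (Fin n → ℝ) → ℕ → ℝ)
    (hεE : ∀ θ t, εE θ (t + 1) = ε θ (t + 1)
      + ∑ j, θ j * M (fun s => ε θ (s + 1) - e (s + 1)) t j)
    (φE : (Fin n → ℝ) → ℕ → Fin n → ℝ)
    (hφE : ∀ θ t i,
      φE θ t i = -((fderiv ℝ (fun θ' => εE θ' (t + 1)) θ) (Pi.single i 1))) :
    (∀ (θ : Fin n → ℝ) (t : ℕ) (i : Fin n),
        (fderiv ℝ (fun θ' => εE θ' (t + 1)) θ) (Pi.single i 1)
          = -φ θ t i + M (fun s => ε θ (s + 1) - e (s + 1)) t i) ∧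
    (∀ (θ₁ θ₂ : Fin n → ℝ) (t : ℕ) (i : Fin n), φE θ₁ t i = φE θ₂ t i) := by
  have gradient : ∀ θ t i, fderiv ℝ (fun θ' => εE θ' (t + 1)) θ (Pi.single i 1)
      = -(ψ t i + M (fun s => e (s + 1)) t i) := by
    intro θ t i
    rw [funext fun θ' => equivalentError_eq_affine M y e (ε θ') (εE θ') ψ (φ θ') θ' t
      (hφ θ' t) (hrel θ' t) (hεE θ' t)]
    exact fderiv_const_sub_sum_mul_apply_single _ _ θ i
  refine ⟨fun θ t i => ?_, fun θ₁ θ₂ t i => by rw [hφE, hφE, gradient, gradient]⟩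
  have hM : M (fun s => ε θ (s + 1) - e (s + 1))
      = M (fun s => ε θ (s + 1)) - M (fun s => e (s + 1)) := map_sub M _ _
  rw [gradient, hφ, hM]
  simp only [Pi.add_apply, Pi.sub_apply]
  ring

/-- In the pseudo-linear regression framework (with
`Q(q⁻¹,θ̂) = 1 + θ̂ᵀ ∂φ/∂(qε)`, `∂φ/∂(qε) = M` independent of `θ̂`), the equivalent
prediction error `ε_E(t+1) = Q ε(t+1) + (1-Q) e(t+1) = ε(t+1) + θ̂ᵀ M(q(ε-e))(t)` has
gradient `∂ε_E(t+1)/∂θ̂ = -φ(t) + (∂φ/∂(qε))(ε(t+1)-e(t+1))`, and consequently the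
equivalent regressor `φ_E(t) = -∂ε_E(t+1)/∂θ̂` does not depend on `θ̂`. -/
theorem stmt_16 {n : ℕ}
    (y e : ℕ → ℝ) (ψ : ℕ → Fin n → ℝ)
    (M : (ℕ → ℝ) →ₗ[ℝ] (ℕ → Fin n → ℝ))
    (hMcausal : ∀ (t : ℕ) (x x' : ℕ → ℝ), (∀ s ≤ t, x s = x' s) → M x t = M x' t)
    (ε : (Fin n → ℝ) → ℕ → ℝ) (φ : (Fin n → ℝ) → ℕ → Fin n → ℝ)
    (hφ : ∀ θ t, φ θ t = ψ t + M (fun s => ε θ (s + 1)) t)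
    (hrel : ∀ θ t, ε θ (t + 1) = y (t + 1) - ∑ i, θ i * φ θ t i)
    (hdiff : ∀ t, Differentiable ℝ (fun θ : Fin n → ℝ => ε θ t))
    (εE : (Fin n → ℝ) → ℕ → ℝ)
    (hεE : ∀ θ t, εE θ (t + 1) = ε θ (t + 1)
      + ∑ j, θ j * M (fun s => ε θ (s + 1) - e (s + 1)) t j)
    (φE : (Fin n → ℝ) → ℕ → Fin n → ℝ)
    (hφE : ∀ θ t i,
      φE θ t i = -((fderiv ℝ (fun θ' => εE θ' (t + 1)) θ) (Pi.single i 1))) :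
    (∀ (θ : Fin n → ℝ) (t : ℕ) (i : Fin n),
        (fderiv ℝ (fun θ' => εE θ' (t + 1)) θ) (Pi.single i 1)
          = -φ θ t i + M (fun s => ε θ (s + 1) - e (s + 1)) t i) ∧
    (∀ (θ₁ θ₂ : Fin n → ℝ) (t : ℕ) (i : Fin n), φE θ₁ t i = φE θ₂ t i) :=
  stmt_16_general y e ψ M ε φ hφ hrel εE hεE φE hφE
end

section
/- If the PAA regressor is filtered as φ_f(t) = (1/Q_f(q⁻¹)) φ(t) with Q_f a fixed (θ̂-independent) invertible causal rational filter, then the signal ε_E(t+1) := (Q/Q_f) ε(t+1) + (1 - Q/Q_f) e(t+1) satisfies ∂ε_E(t+1)/∂θ̂ = -φ_f(t) + (∂φ_f/∂(qε))(ε(t+1) - e(t+1)), and the filtered equivalent regressor φ_E(t) := -∂ε_E(t+1)/∂θ̂ is independent of θ̂, assuming ∂²φ/∂(qε)∂θ̂ = 0. -/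
/-!
Differentiating the prediction-error recursion `ε(t+1) = y(t+1) - θᵀ φ(t)`, where `φ` depends on
`θ` only through `M` applied to `ε`, gives the sensitivity equation `Q(θ) ∂ε/∂θ = -φ` with
`Q(θ) = 1 + θᵀ M`. Since `ε_E(t+1) = e(t+1) + Q_f⁻¹ (Q(θ) (ε - e))(t)`, the product rule gives
`∂ε_E/∂θ = Q_f⁻¹ (Q(θ) ∂ε/∂θ + M (ε - e)) = Q_f⁻¹ (-φ + M (ε - e))`, and
`φ - M (ε - e) = ψ + M e` does not involve `θ`. Causality is what lets the operators commute with
`∂/∂θ`: at time `t` a causal operator is a finite linear combination of the first `t + 1` samples.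
-/

open Finset

section Causal

variable {R V : Type*} [Semiring R] [AddCommMonoid V] [Module R V]

def IsCausal (L : (ℕ → R) →ₗ[R] (ℕ → V)) : Prop :=
  ∀ (t : ℕ) (x x' : ℕ → R), (∀ s ≤ t, x s = x' s) → L x t = L x' t

theorem IsCausal.apply_eq_sum {L : (ℕ → R) →ₗ[R] (ℕ → V)} (hL : IsCausal L) (x : ℕ → R)
    (t : ℕ) : L x t = ∑ s ∈ range (t + 1), x s • L (Pi.single s 1) t := by
  have hx : L x t = L (∑ s ∈ range (t + 1), x s • Pi.single s 1) t :=
    hL t _ _ fun s hs => by simp [Finset.sum_apply, Pi.single_apply, Nat.lt_succ_iff.2 hs]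
  simp [hx, map_sum, Finset.sum_apply]

end Causal

section CausalDeriv

variable {𝕜 E V : Type*} [NontriviallyNormedField 𝕜] [NormedAddCommGroup E] [NormedSpace 𝕜 E]
  [NormedAddCommGroup V] [NormedSpace 𝕜 V] {L : (ℕ → 𝕜) →ₗ[𝕜] (ℕ → V)} {x : E → ℕ → 𝕜} {θ : E}

theorem IsCausal.hasFDerivAt_apply (hL : IsCausal L) {x' : ℕ → E →L[𝕜] 𝕜}
    (hx : ∀ s, HasFDerivAt (fun θ => x θ s) (x' s) θ) (t : ℕ) :
    HasFDerivAt (fun θ => L (x θ) t)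
      (∑ s ∈ range (t + 1), (x' s).smulRight (L (Pi.single s 1) t)) θ := by
  rw [show (fun θ => L (x θ) t) = fun θ => ∑ s ∈ range (t + 1), x θ s • L (Pi.single s 1) t
    from funext fun θ => hL.apply_eq_sum _ t]
  exact HasFDerivAt.fun_sum fun s _ => (hx s).smul_const _

theorem IsCausal.differentiableAt_apply (hL : IsCausal L)
    (hx : ∀ s, DifferentiableAt 𝕜 (fun θ => x θ s) θ) (t : ℕ) :
    DifferentiableAt 𝕜 (fun θ => L (x θ) t) θ :=
  (hL.hasFDerivAt_apply (fun s => (hx s).hasFDerivAt) t).differentiableAt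

theorem IsCausal.fderiv_apply (hL : IsCausal L)
    (hx : ∀ s, DifferentiableAt 𝕜 (fun θ => x θ s) θ) (t : ℕ) (v : E) :
    fderiv 𝕜 (fun θ => L (x θ) t) θ v = L (fun s => fderiv 𝕜 (fun θ => x θ s) θ v) t := by
  rw [(hL.hasFDerivAt_apply (fun s => (hx s).hasFDerivAt) t).fderiv, hL.apply_eq_sum _ t]
  simp

end CausalDeriv

section FeedbackOperator

variable {𝕜 ι : Type*} [NontriviallyNormedField 𝕜] [Fintype ι]
  (M : (ℕ → 𝕜) →ₗ[𝕜] (ℕ → ι → 𝕜))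

/-- The operator `Q(q⁻¹, θ) = 1 + θᵀ ∂φ/∂(qε)`, with `M` standing for `∂φ/∂(qε)`. -/
def feedbackOp (θ : ι → 𝕜) (x : ℕ → 𝕜) (t : ℕ) : 𝕜 :=
  x t + ∑ j, θ j * M x t j

variable {M} {x : (ι → 𝕜) → ℕ → 𝕜} {θ : ι → 𝕜}

theorem differentiableAt_feedbackOp (hM : IsCausal M)
    (hx : ∀ s, DifferentiableAt 𝕜 (fun θ => x θ s) θ) (t : ℕ) :
    DifferentiableAt 𝕜 (fun θ => feedbackOp M θ (x θ) t) θ := by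
  have hMx := differentiableAt_pi.1 (hM.differentiableAt_apply hx t)
  exact (hx t).fun_add
    (DifferentiableAt.fun_sum fun j _ => (differentiableAt_apply j θ).fun_mul (hMx j))

theorem fderiv_feedbackOp_apply (hM : IsCausal M)
    (hx : ∀ s, DifferentiableAt 𝕜 (fun θ => x θ s) θ) (t : ℕ) (v : ι → 𝕜) :
    fderiv 𝕜 (fun θ => feedbackOp M θ (x θ) t) θ v
      = feedbackOp M θ (fun s => fderiv 𝕜 (fun θ => x θ s) θ v) t + ∑ j, v j * M (x θ) t j := by
  have hMx := hM.differentiableAt_apply hx t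
  have hMxj : ∀ j, HasFDerivAt (fun θ => M (x θ) t j)
      ((ContinuousLinearMap.proj j).comp (fderiv 𝕜 (fun θ => M (x θ) t) θ)) θ :=
    hasFDerivAt_pi'.1 hMx.hasFDerivAt
  have hQ : HasFDerivAt (fun θ => feedbackOp M θ (x θ) t) _ θ := (hx t).hasFDerivAt.fun_add
    (HasFDerivAt.fun_sum (u := univ) fun j _ => (hasFDerivAt_apply j θ).fun_mul (hMxj j))
  rw [hQ.fderiv]
  simp [feedbackOp, hM.fderiv_apply hx, sum_add_distrib, mul_comm, add_assoc]

end FeedbackOperator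

section EquivalentError

variable {𝕜 ι : Type*} [NontriviallyNormedField 𝕜] [Fintype ι]
  {M : (ℕ → 𝕜) →ₗ[𝕜] (ℕ → ι → 𝕜)} {y : ℕ → 𝕜} {ψ : ℕ → ι → 𝕜}
  {ε : (ι → 𝕜) → ℕ → 𝕜} {φ : (ι → 𝕜) → ℕ → ι → 𝕜}

theorem feedbackOp_fderiv_error_apply (hM : IsCausal M)
    (hφ : ∀ θ t, φ θ t = ψ t + M (fun s => ε θ (s + 1)) t)
    (hrel : ∀ θ t, ε θ (t + 1) = y (t + 1) - ∑ i, θ i * φ θ t i)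
    (hdiff : ∀ t, Differentiable 𝕜 (fun θ => ε θ t)) (θ : ι → 𝕜) (t : ℕ) (v : ι → 𝕜) :
    feedbackOp M θ (fun s => fderiv 𝕜 (fun θ => ε θ (s + 1)) θ v) t = -∑ j, v j * φ θ t j := by
  have hQε : (fun θ => feedbackOp M θ (fun s => ε θ (s + 1)) t)
      = fun θ => y (t + 1) - ∑ j, θ j * ψ t j := by
    funext θ
    simp only [feedbackOp, hrel θ t, hφ, Pi.add_apply, mul_add, sum_add_distrib]
    abel
  have hlin : HasFDerivAt (fun θ : ι → 𝕜 => y (t + 1) - ∑ j, θ j * ψ t j)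
      (-∑ j, ψ t j • ContinuousLinearMap.proj (R := 𝕜) j) θ :=
    (HasFDerivAt.fun_sum fun j _ => (hasFDerivAt_apply j θ).mul_const (ψ t j)).const_sub _
  have hD := fderiv_feedbackOp_apply hM (fun s => hdiff (s + 1) θ) t v
  rw [hQε, hlin.fderiv] at hD
  simp only [neg_apply, _root_.sum_apply, smul_apply, ContinuousLinearMap.proj_apply, smul_eq_mul,
    mul_comm (ψ t _)] at hD
  simp only [hφ, Pi.add_apply, mul_add, sum_add_distrib]
  linear_combination -hD

theorem fderiv_equivalentError_apply {N' : (ℕ → 𝕜) →ₗ[𝕜] (ℕ → 𝕜)} {e : ℕ → 𝕜}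
    {εE : (ι → 𝕜) → ℕ → 𝕜} (hM : IsCausal M) (hN' : IsCausal N')
    (hφ : ∀ θ t, φ θ t = ψ t + M (fun s => ε θ (s + 1)) t)
    (hrel : ∀ θ t, ε θ (t + 1) = y (t + 1) - ∑ i, θ i * φ θ t i)
    (hdiff : ∀ t, Differentiable 𝕜 (fun θ => ε θ t))
    (hεE : ∀ θ t, εE θ (t + 1) = e (t + 1)
      + N' (feedbackOp M θ (fun s => ε θ (s + 1) - e (s + 1))) t)
    (θ : ι → 𝕜) (t : ℕ) (v : ι → 𝕜) :
    fderiv 𝕜 (fun θ => εE θ (t + 1)) θ v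
      = N' (fun s => ∑ j, v j * (M (fun s => ε θ (s + 1) - e (s + 1)) s j - φ θ s j)) t := by
  have hu : ∀ s, DifferentiableAt 𝕜 (fun θ => ε θ (s + 1) - e (s + 1)) θ :=
    fun s => (hdiff (s + 1) θ).sub_const _
  rw [funext fun θ => hεE θ t, fderiv_const_add,
    hN'.fderiv_apply (fun s => differentiableAt_feedbackOp hM hu s)]
  refine congrArg (fun x => N' x t) (funext fun s => ?_)
  simp only [fderiv_feedbackOp_apply hM hu, fderiv_sub_const,
    feedbackOp_fderiv_error_apply hM hφ hrel hdiff, mul_sub, sum_sub_distrib]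
  ring

theorem neg_fderiv_equivalentError_apply {N' : (ℕ → 𝕜) →ₗ[𝕜] (ℕ → 𝕜)} {e : ℕ → 𝕜}
    {εE : (ι → 𝕜) → ℕ → 𝕜} (hM : IsCausal M) (hN' : IsCausal N')
    (hφ : ∀ θ t, φ θ t = ψ t + M (fun s => ε θ (s + 1)) t)
    (hrel : ∀ θ t, ε θ (t + 1) = y (t + 1) - ∑ i, θ i * φ θ t i)
    (hdiff : ∀ t, Differentiable 𝕜 (fun θ => ε θ t))
    (hεE : ∀ θ t, εE θ (t + 1) = e (t + 1)
      + N' (feedbackOp M θ (fun s => ε θ (s + 1) - e (s + 1))) t)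
    (θ : ι → 𝕜) (t : ℕ) (v : ι → 𝕜) :
    -fderiv 𝕜 (fun θ => εE θ (t + 1)) θ v
      = N' (fun s => ∑ j, v j * (ψ s j + M (fun s => e (s + 1)) s j)) t := by
  rw [fderiv_equivalentError_apply hM hN' hφ hrel hdiff hεE, ← Pi.neg_apply, ← map_neg]
  refine congrArg (fun x => N' x t) (funext fun s => ?_)
  have hMu : M (fun s => ε θ (s + 1) - e (s + 1)) s
      = M (fun s => ε θ (s + 1)) s - M (fun s => e (s + 1)) s := by
    rw [← Pi.sub_apply, ← map_sub]
    rfl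
  simp only [Pi.neg_apply, hMu, hφ, Pi.add_apply, Pi.sub_apply, ← sum_neg_distrib]
  exact sum_congr rfl fun j _ => by ring

end EquivalentError

theorem stmt_17_general {n : ℕ}
    (y e : ℕ → ℝ) (ψ : ℕ → Fin n → ℝ)
    (M : (ℕ → ℝ) →ₗ[ℝ] (ℕ → Fin n → ℝ))
    (hMcausal : ∀ (t : ℕ) (x x' : ℕ → ℝ), (∀ s ≤ t, x s = x' s) → M x t = M x' t)
    (N' : (ℕ → ℝ) →ₗ[ℝ] (ℕ → ℝ))
    (hN'causal : ∀ (t : ℕ) (x x' : ℕ → ℝ), (∀ s ≤ t, x s = x' s) → N' x t = N' x' t)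
    (ε : (Fin n → ℝ) → ℕ → ℝ) (φ : (Fin n → ℝ) → ℕ → Fin n → ℝ)
    (hφ : ∀ θ t, φ θ t = ψ t + M (fun s => ε θ (s + 1)) t)
    (hrel : ∀ θ t, ε θ (t + 1) = y (t + 1) - ∑ i, θ i * φ θ t i)
    (hdiff : ∀ t, Differentiable ℝ (fun θ : Fin n → ℝ => ε θ t))
    (φf : (Fin n → ℝ) → ℕ → Fin n → ℝ)
    (hφf : ∀ θ t i, φf θ t i = N' (fun s => φ θ s i) t)
    (εE : (Fin n → ℝ) → ℕ → ℝ)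
    (hεE : ∀ θ t, εE θ (t + 1) = e (t + 1)
      + N' (fun t' => (ε θ (t' + 1) - e (t' + 1))
          + ∑ j, θ j * M (fun s => ε θ (s + 1) - e (s + 1)) t' j) t)
    (φE : (Fin n → ℝ) → ℕ → Fin n → ℝ)
    (hφE : ∀ θ t i,
      φE θ t i = -((fderiv ℝ (fun θ' => εE θ' (t + 1)) θ) (Pi.single i 1))) :
    (∀ (θ : Fin n → ℝ) (t : ℕ) (i : Fin n),
        (fderiv ℝ (fun θ' => εE θ' (t + 1)) θ) (Pi.single i 1)
          = -φf θ t i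
            + N' (fun s => M (fun s' => ε θ (s' + 1) - e (s' + 1)) s i) t) ∧
    (∀ (θ₁ θ₂ : Fin n → ℝ) (t : ℕ) (i : Fin n), φE θ₁ t i = φE θ₂ t i) := by
  constructor
  · intro θ t i
    rw [fderiv_equivalentError_apply hMcausal hN'causal hφ hrel hdiff hεE, hφf, neg_add_eq_sub]
    simp only [Pi.single_apply, ite_mul, one_mul, zero_mul, sum_ite_eq', mem_univ, if_true]
    exact congrFun (map_sub N' (fun s => M (fun s => ε θ (s + 1) - e (s + 1)) s i)
      (fun s => φ θ s i)) t
  · intro θ₁ θ₂ t i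
    simp only [hφE, neg_fderiv_equivalentError_apply hMcausal hN'causal hφ hrel hdiff hεE]

/-- With a fixed (θ̂-independent) invertible causal filter `Q_f` applied
to the regressor, `φ_f = Q_f⁻¹ φ`, the equivalent prediction error
`ε_E(t+1) = (Q/Q_f) ε(t+1) + (1 - Q/Q_f) e(t+1)` satisfies
`∂ε_E(t+1)/∂θ̂ = -φ_f(t) + (∂φ_f/∂(qε))(ε(t+1) - e(t+1))` (with
`∂φ_f/∂(qε) = Q_f⁻¹ ∘ M`), and the filtered equivalent regressor
`φ_E(t) = -∂ε_E(t+1)/∂θ̂` is independent of `θ̂`. Here `N` realizes `Q_f` and `N'` its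
inverse as causal linear operators on sequences. -/
theorem stmt_17 {n : ℕ}
    (y e : ℕ → ℝ) (ψ : ℕ → Fin n → ℝ)
    (M : (ℕ → ℝ) →ₗ[ℝ] (ℕ → Fin n → ℝ))
    (hMcausal : ∀ (t : ℕ) (x x' : ℕ → ℝ), (∀ s ≤ t, x s = x' s) → M x t = M x' t)
    (N N' : (ℕ → ℝ) →ₗ[ℝ] (ℕ → ℝ))
    (hNcausal : ∀ (t : ℕ) (x x' : ℕ → ℝ), (∀ s ≤ t, x s = x' s) → N x t = N x' t)
    (hN'causal : ∀ (t : ℕ) (x x' : ℕ → ℝ), (∀ s ≤ t, x s = x' s) → N' x t = N' x' t)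
    (hinv : ∀ x : ℕ → ℝ, N (N' x) = x ∧ N' (N x) = x)
    (ε : (Fin n → ℝ) → ℕ → ℝ) (φ : (Fin n → ℝ) → ℕ → Fin n → ℝ)
    (hφ : ∀ θ t, φ θ t = ψ t + M (fun s => ε θ (s + 1)) t)
    (hrel : ∀ θ t, ε θ (t + 1) = y (t + 1) - ∑ i, θ i * φ θ t i)
    (hdiff : ∀ t, Differentiable ℝ (fun θ : Fin n → ℝ => ε θ t))
    (φf : (Fin n → ℝ) → ℕ → Fin n → ℝ)
    (hφf : ∀ θ t i, φf θ t i = N' (fun s => φ θ s i) t)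
    (εE : (Fin n → ℝ) → ℕ → ℝ)
    (hεE : ∀ θ t, εE θ (t + 1) = e (t + 1)
      + N' (fun t' => (ε θ (t' + 1) - e (t' + 1))
          + ∑ j, θ j * M (fun s => ε θ (s + 1) - e (s + 1)) t' j) t)
    (φE : (Fin n → ℝ) → ℕ → Fin n → ℝ)
    (hφE : ∀ θ t i,
      φE θ t i = -((fderiv ℝ (fun θ' => εE θ' (t + 1)) θ) (Pi.single i 1))) :
    (∀ (θ : Fin n → ℝ) (t : ℕ) (i : Fin n),
        (fderiv ℝ (fun θ' => εE θ' (t + 1)) θ) (Pi.single i 1)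
          = -φf θ t i
            + N' (fun s => M (fun s' => ε θ (s' + 1) - e (s' + 1)) s i) t) ∧
    (∀ (θ₁ θ₂ : Fin n → ℝ) (t : ℕ) (i : Fin n), φE θ₁ t i = φE θ₂ t i) :=
  stmt_17_general y e ψ M hMcausal N' hN'causal ε φ hφ hrel hdiff φf hφf εE hεE φE hφE
end
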